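/- arXiv:1809.09817 — 3 statements merged into one kernel-verified Lean document; each statement's English description precedes it below -/
import Mathlib

section
/- Let A and P be real n×n matrices such that P is symmetric positive definite and the matrix −(A·P + P·Aᵀ) is positive definite. Then every complex eigenvalue of A (i.e., every element of the spectrum of the complexification of A) has strictly negative real part. -/
/-!
Take a left eigenvector `w` of `A` for `μ`, so that `w A = μ w` and `Aᴴ w̄ = μ̄ w̄`. The Lyapunov
form then collapses to `w (A P + P Aᴴ) w̄ = (μ + μ̄) · w P w̄ = 2 Re μ · w P w̄`; the left-hand side
has negative real part and `w P w̄` positive real part, so `Re μ < 0`. For real `A` and `P` one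
passes to the complexifications, which stay positive definite because the complex quadratic form
of a real symmetric matrix is the sum of its real forms at the real and imaginary parts.
-/

open Matrix
open scoped ComplexOrder

namespace Matrix

variable {ι : Type*} [Fintype ι]

lemma exists_vecMul_eq_smul_of_mem_spectrum {K : Type*} [Field K] [DecidableEq ι]
    {A : Matrix ι ι K} {μ : K} (hμ : μ ∈ spectrum K A) : ∃ w ≠ 0, w ᵥ* A = μ • w := by
  rw [spectrum.mem_iff, isUnit_iff_isUnit_det, isUnit_iff_ne_zero, not_not,
    ← exists_vecMul_eq_zero_iff] at hμ
  obtain ⟨w, hw, hwA⟩ := hμ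
  rw [vecMul_sub, sub_eq_zero, Algebra.algebraMap_eq_smul_one, vecMul_smul, vecMul_one] at hwA
  exact ⟨w, hw, hwA.symm⟩

lemma dotProduct_lyapunov_mulVec_star_of_vecMul_eq_smul {R : Type*} [CommSemiring R]
    [StarRing R] {A : Matrix ι ι R} (P : Matrix ι ι R) {w : ι → R} {μ : R}
    (hw : w ᵥ* A = μ • w) :
    w ⬝ᵥ (A * P + P * Aᴴ) *ᵥ star w = (μ + star μ) * (w ⬝ᵥ P *ᵥ star w) := by
  have hAH : Aᴴ *ᵥ star w = star μ • star w := by rw [← star_vecMul, hw, star_smul]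
  rw [add_mulVec, dotProduct_add, ← mulVec_mulVec, ← mulVec_mulVec, dotProduct_mulVec, hw, hAH,
    smul_dotProduct, mulVec_smul, dotProduct_smul, smul_eq_mul, smul_eq_mul, add_mul]

variable {𝕜 : Type*} [RCLike 𝕜]

theorem re_lt_zero_of_mem_spectrum_of_lyapunov [DecidableEq ι] {A P : Matrix ι ι 𝕜}
    (hP : P.PosDef) (hAP : (-(A * P + P * Aᴴ)).PosDef) {μ : 𝕜} (hμ : μ ∈ spectrum 𝕜 A) :
    RCLike.re μ < 0 := by
  obtain ⟨w, hw, hwA⟩ := exists_vecMul_eq_smul_of_mem_spectrum hμ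
  have hw' : star w ≠ 0 := star_ne_zero.mpr hw
  have hq : 0 < RCLike.re (w ⬝ᵥ P *ᵥ star w) := by
    simpa only [star_star] using hP.re_dotProduct_pos hw'
  have hL : RCLike.re ((μ + star μ) * (w ⬝ᵥ P *ᵥ star w)) < 0 := by
    simpa only [star_star, neg_mulVec, dotProduct_neg, map_neg, neg_pos,
      dotProduct_lyapunov_mulVec_star_of_vecMul_eq_smul P hwA] using hAP.re_dotProduct_pos hw'
  rw [RCLike.star_def, RCLike.add_conj, ← RCLike.ofReal_ofNat, ← RCLike.ofReal_mul,
    RCLike.re_ofReal_mul] at hL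
  nlinarith

lemma re_star_dotProduct_map_mulVec (M : Matrix ι ι ℝ) (x : ι → 𝕜) :
    RCLike.re (star x ⬝ᵥ M.map (algebraMap ℝ 𝕜) *ᵥ x) =
      (fun i => RCLike.re (x i)) ⬝ᵥ M *ᵥ (fun i => RCLike.re (x i)) +
        (fun i => RCLike.im (x i)) ⬝ᵥ M *ᵥ (fun i => RCLike.im (x i)) := by
  simp only [dotProduct, mulVec, map_apply, Pi.star_apply, Finset.mul_sum, map_sum,
    ← Finset.sum_add_distrib]
  refine Finset.sum_congr rfl fun i _ => Finset.sum_congr rfl fun j _ => ?_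
  simp [RCLike.mul_re, RCLike.conj_re, RCLike.conj_im]

lemma PosDef.map_algebraMap {M : Matrix ι ι ℝ} (hM : M.PosDef) :
    (M.map (algebraMap ℝ 𝕜)).PosDef := by
  have hH : (M.map (algebraMap ℝ 𝕜)).IsHermitian := hM.isHermitian.map _ fun r => by simp
  refine .of_dotProduct_mulVec_pos hH fun x hx => RCLike.pos_iff.mpr
    ⟨?_, hH.im_star_dotProduct_mulVec_self x⟩
  have hquad (y : ι → ℝ) : 0 ≤ y ⬝ᵥ M *ᵥ y := by
    simpa using hM.posSemidef.dotProduct_mulVec_nonneg y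
  rw [re_star_dotProduct_map_mulVec]
  by_cases hre : (fun i => RCLike.re (x i)) = 0
  · have him : (fun i => RCLike.im (x i)) ≠ 0 := fun him => hx <| funext fun i =>
      RCLike.ext (by simpa using congrFun hre i) (by simpa using congrFun him i)
    linarith [hquad fun i => RCLike.re (x i), by simpa using hM.dotProduct_mulVec_pos him]
  · linarith [hquad fun i => RCLike.im (x i), by simpa using hM.dotProduct_mulVec_pos hre]

end Matrix

/-- **Lyapunov stability criterion.** If `P` is symmetric positive definite and
`-(A * P + P * Aᵀ)` is positive definite, then every complex eigenvalue of `A`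
(element of the spectrum of the complexification of `A`) has strictly negative real part. -/
theorem lyapunov_strict_stability {n : ℕ} (A P : Matrix (Fin n) (Fin n) ℝ)
    (hP : P.PosDef) (hAP : (-(A * P + P * Aᵀ)).PosDef) :
    ∀ μ ∈ spectrum ℂ (A.map (algebraMap ℝ ℂ)), μ.re < 0 := by
  intro μ hμ
  have hAH : (A.map (algebraMap ℝ ℂ))ᴴ = Aᵀ.map (algebraMap ℝ ℂ) := by
    rw [← conjTranspose_map _ fun r => by simp, conjTranspose_eq_transpose_of_trivial]
  refine re_lt_zero_of_mem_spectrum_of_lyapunov hP.map_algebraMap ?_ hμ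
  rw [hAH]
  simpa only [← RingHom.mapMatrix_apply, map_neg, map_add, map_mul] using
    hAP.map_algebraMap (𝕜 := ℂ)
end

section
/- Let A, P, Q be real n×n matrices with P symmetric positive semidefinite, Q symmetric positive definite, and A·P + P·Aᵀ + Q ⪯ 0 (negative semidefinite). Then every complex eigenvalue of A has strictly negative real part. -/
/-!
If `w ≠ 0` is a left eigenvector of `A` for `μ`, i.e. `w* A = μ w*`, then
`w* (A P + P A* + Q) w = 2 Re μ · w* P w + w* Q w`. The left side is `≤ 0` by hypothesis, while
`w* P w ≥ 0` and `w* Q w > 0`, so `Re μ < 0`. The real statement is the case of real matrices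
viewed as complex ones, which keeps both definiteness hypotheses.
-/

open Matrix

namespace Matrix

variable {n : Type*} [Fintype n]

lemma star_dotProduct_lyapunov_mulVec {R : Type*} [CommRing R] [StarRing R]
    {A P Q : Matrix n n R} {μ : R} {v : n → R} (hv : Aᴴ *ᵥ v = star μ • v) :
    star v ⬝ᵥ (A * P + P * Aᴴ + Q) *ᵥ v
      = (μ + star μ) * (star v ⬝ᵥ P *ᵥ v) + star v ⬝ᵥ Q *ᵥ v := by
  have hleft : star v ᵥ* A = μ • star v := by
    simpa only [star_mulVec, conjTranspose_conjTranspose, star_smul, star_star] using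
      congrArg star hv
  rw [add_mulVec, add_mulVec, dotProduct_add, dotProduct_add, ← mulVec_mulVec, ← mulVec_mulVec,
    dotProduct_mulVec, hleft, hv, mulVec_smul, smul_dotProduct, dotProduct_smul, smul_eq_mul,
    smul_eq_mul]
  ring

lemma exists_conjTranspose_mulVec_eq_star_smul {K : Type*} [Field K] [StarRing K] [DecidableEq n]
    {A : Matrix n n K} {μ : K} (hμ : μ ∈ spectrum K A) :
    ∃ v ≠ 0, Aᴴ *ᵥ v = star μ • v := by
  have : star μ ∈ spectrum K Aᴴ := by
    rw [← star_eq_conjTranspose, spectrum.map_star]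
    simpa using hμ
  rw [← spectrum_toLin', ← Module.End.hasEigenvalue_iff_mem_spectrum] at this
  obtain ⟨v, hv⟩ := this.exists_hasEigenvector
  exact ⟨v, hv.2, by simpa using hv.apply_eq_smul⟩

variable {𝕜 : Type*} [RCLike 𝕜]

open scoped ComplexOrder

theorem re_lt_zero_of_lyapunov_of_mem_spectrum [DecidableEq n] {A P Q : Matrix n n 𝕜}
    (hP : P.PosSemidef) (hQ : Q.PosDef) (h : (-(A * P + P * Aᴴ + Q)).PosSemidef)
    {μ : 𝕜} (hμ : μ ∈ spectrum 𝕜 A) : RCLike.re μ < 0 := by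
  obtain ⟨w, hw0, hw⟩ := exists_conjTranspose_mulVec_eq_star_smul hμ
  have hform : 2 * (RCLike.re μ : 𝕜) * (star w ⬝ᵥ P *ᵥ w) + star w ⬝ᵥ Q *ᵥ w ≤ 0 := by
    simpa only [neg_mulVec, dotProduct_neg, star_dotProduct_lyapunov_mulVec hw, neg_nonneg,
      RCLike.star_def, RCLike.add_conj] using h.dotProduct_mulVec_nonneg w
  have hp := RCLike.nonneg_iff.1 (hP.dotProduct_mulVec_nonneg w)
  have hq := (RCLike.pos_iff.1 (hQ.dotProduct_mulVec_pos hw0)).1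
  have hre := (RCLike.le_iff_re_im.1 hform).1
  simp only [map_add, RCLike.mul_re, RCLike.ofNat_re, RCLike.ofReal_re, RCLike.ofNat_im,
    RCLike.ofReal_im, mul_zero, sub_zero, hp.2, map_zero] at hre
  by_contra! hμ
  nlinarith [mul_nonneg hμ hp.1]

omit [Fintype n] in
lemma conjTranspose_map_ofReal {m : Type*} (A : Matrix m n ℝ) :
    (A.map (algebraMap ℝ 𝕜))ᴴ = Aᵀ.map (algebraMap ℝ 𝕜) := by
  rw [← conjTranspose_map _ fun x => by simp, conjTranspose_eq_transpose_of_trivial]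

lemma re_star_dotProduct_map_ofReal_mulVec (M : Matrix n n ℝ) (v : n → 𝕜) :
    RCLike.re (star v ⬝ᵥ M.map (algebraMap ℝ 𝕜) *ᵥ v)
      = (fun i => RCLike.re (v i)) ⬝ᵥ M *ᵥ (fun i => RCLike.re (v i))
      + (fun i => RCLike.im (v i)) ⬝ᵥ M *ᵥ (fun i => RCLike.im (v i)) := by
  simp only [dotProduct, mulVec, Finset.mul_sum, map_sum, ← Finset.sum_add_distrib]
  refine Finset.sum_congr rfl fun i _ => Finset.sum_congr rfl fun j _ => ?_
  simp [RCLike.mul_re, RCLike.mul_im]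

omit [Fintype n] in
lemma IsHermitian.map_ofReal {M : Matrix n n ℝ} (hM : M.IsHermitian) :
    (M.map (algebraMap ℝ 𝕜)).IsHermitian :=
  hM.map _ fun x => by simp

lemma PosSemidef.map_ofReal {M : Matrix n n ℝ} (hM : M.PosSemidef) :
    (M.map (algebraMap ℝ 𝕜)).PosSemidef := by
  refine .of_dotProduct_mulVec_nonneg hM.isHermitian.map_ofReal fun v => RCLike.nonneg_iff.2
    ⟨?_, hM.isHermitian.map_ofReal.im_star_dotProduct_mulVec_self v⟩
  rw [re_star_dotProduct_map_ofReal_mulVec]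
  exact add_nonneg (by simpa using hM.dotProduct_mulVec_nonneg _)
    (by simpa using hM.dotProduct_mulVec_nonneg _)

lemma PosDef.map_ofReal {M : Matrix n n ℝ} (hM : M.PosDef) :
    (M.map (algebraMap ℝ 𝕜)).PosDef := by
  refine .of_dotProduct_mulVec_pos hM.isHermitian.map_ofReal fun v hv => RCLike.pos_iff.2
    ⟨?_, hM.isHermitian.map_ofReal.im_star_dotProduct_mulVec_self v⟩
  rw [re_star_dotProduct_map_ofReal_mulVec]
  have hre := hM.posSemidef.dotProduct_mulVec_nonneg fun i => RCLike.re (v i)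
  have him := hM.posSemidef.dotProduct_mulVec_nonneg fun i => RCLike.im (v i)
  rw [star_trivial] at hre him
  obtain hx | hy : (fun i => RCLike.re (v i)) ≠ 0 ∨ (fun i => RCLike.im (v i)) ≠ 0 := by
    by_contra! h0
    exact hv <| funext fun i =>
      RCLike.ext (by simpa using congrFun h0.1 i) (by simpa using congrFun h0.2 i)
  · exact add_pos_of_pos_of_nonneg (by simpa using hM.dotProduct_mulVec_pos hx) him
  · exact add_pos_of_nonneg_of_pos hre (by simpa using hM.dotProduct_mulVec_pos hy)

end Matrix

/-- If `P` is symmetric positive semidefinite, `Q` is symmetric positive definite, and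
`A * P + P * Aᵀ + Q ⪯ 0` (negative semidefinite), then every complex eigenvalue of `A`
has strictly negative real part. -/
theorem hurwitz_of_relaxed_lyapunov_ineq {n : ℕ} (A P Q : Matrix (Fin n) (Fin n) ℝ)
    (hP : P.PosSemidef) (hQ : Q.PosDef)
    (h : (-(A * P + P * Aᵀ + Q)).PosSemidef) :
    ∀ μ ∈ spectrum ℂ (A.map (algebraMap ℝ ℂ)), μ.re < 0 := by
  intro μ hμ
  have hmap : (-(A * P + P * Aᵀ + Q)).map (algebraMap ℝ ℂ) =
      -(A.map (algebraMap ℝ ℂ) * P.map (algebraMap ℝ ℂ)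
        + P.map (algebraMap ℝ ℂ) * (A.map (algebraMap ℝ ℂ))ᴴ + Q.map (algebraMap ℝ ℂ)) := by
    rw [conjTranspose_map_ofReal]
    simp only [← RingHom.mapMatrix_apply, map_neg, map_add, map_mul]
  exact re_lt_zero_of_lyapunov_of_mem_spectrum hP.map_ofReal hQ.map_ofReal
    (hmap ▸ h.map_ofReal) hμ
end

section
/- Let A be a real n×n matrix all of whose complex eigenvalues have strictly negative real part, let Q be a real symmetric n×n matrix, and let P, P₀ be real symmetric n×n matrices such that A·P + P·Aᵀ + Q ⪯ 0 (negative semidefinite) and A·P₀ + P₀·Aᵀ + Q = 0. Then P − P₀ is positive semidefinite. -/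
/-!
With `D = P - P₀` and `C = -(A P + P Aᵀ + Q)` we have `A D + D Aᵀ = -C` with `C ⪰ 0`.
The flow `M(t) = e^{tA} D e^{tAᵀ}` satisfies `M' = e^{tA} (A D + D Aᵀ) e^{tAᵀ} ⪯ 0`, so each
quadratic form `xᵀ M(t) x` is antitone, and it tends to `0` because `e^{tA} → 0` for a Hurwitz
matrix. Hence `xᵀ D x = xᵀ M(0) x ≥ 0`.

The decay `e^{tA} → 0` is proved over `ℂ`: every vector is a sum of generalized eigenvectors, and
on a generalized eigenvector `u` for `μ` one has `e^{tB} u = e^{tμ} ∑_{k<N} tᵏ/k! (B - μ)ᵏ u`,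
a polynomial in `t` times the decaying exponential `e^{tμ}`.
-/

open Matrix NormedSpace Filter Topology Finset Nat

theorem Complex.tendsto_exp_mul_mul_pow_atTop_nhds_zero {μ : ℂ} (hμ : μ.re < 0) (k : ℕ) :
    Tendsto (fun t : ℝ => Complex.exp (t * μ) * (t : ℂ) ^ k) atTop (𝓝 0) := by
  rw [tendsto_zero_iff_norm_tendsto_zero]
  refine (tendsto_rpow_mul_exp_neg_mul_atTop_nhds_zero k (-μ.re) (by linarith)).congr' ?_
  filter_upwards [eventually_ge_atTop 0] with t ht
  rw [norm_mul, Complex.norm_exp, norm_pow, Complex.norm_real, Real.norm_of_nonneg ht,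
    Real.rpow_natCast]
  simp [mul_comm]

namespace Matrix

variable {m : Type*} [Fintype m] [DecidableEq m]

theorem exp_mulVec_eq_sum_of_pow_mulVec_eq_zero {𝕜 : Type*} [RCLike 𝕜] (M : Matrix m m 𝕜)
    {v : m → 𝕜} {N : ℕ} (h : M ^ N *ᵥ v = 0) :
    exp M *ᵥ v = ∑ k ∈ range N, ((k ! : 𝕜)⁻¹ • M ^ k) *ᵥ v := by
  open scoped Norms.Operator in
  let L := LinearMap.toContinuousLinearMap
    ((mulVecBilin 𝕜 𝕜 : Matrix m m 𝕜 →ₗ[𝕜] (m → 𝕜) →ₗ[𝕜] m → 𝕜).flip v)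
  have hsum : HasSum (fun k => ((k ! : 𝕜)⁻¹ • M ^ k) *ᵥ v) (exp M *ᵥ v) :=
    L.hasSum (exp_series_hasSum_exp' (𝕂 := 𝕜) M)
  refine hsum.unique (hasSum_sum_of_ne_finset_zero fun k hk => ?_)
  obtain ⟨j, rfl⟩ := Nat.exists_eq_add_of_le (not_lt.mp (mem_range.not.mp hk))
  rw [smul_mulVec, add_comm, pow_add, ← mulVec_mulVec, h, mulVec_zero, smul_zero]

theorem tendsto_exp_smul_mulVec_of_pow_sub_mulVec_eq_zero (B : Matrix m m ℂ) {μ : ℂ}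
    (hμ : μ.re < 0) {u : m → ℂ} {N : ℕ} (hu : (B - μ • 1) ^ N *ᵥ u = 0) :
    Tendsto (fun t : ℝ => exp ((t : ℂ) • B) *ᵥ u) atTop (𝓝 0) := by
  have hexp (t : ℝ) : exp ((t : ℂ) • B) *ᵥ u = ∑ k ∈ range N,
      (Complex.exp (t * μ) * (t : ℂ) ^ k) • (((k ! : ℂ)⁻¹ • (B - μ • 1) ^ k) *ᵥ u) := by
    have hsplit : (t : ℂ) • B = (t * μ : ℂ) • 1 + (t : ℂ) • (B - μ • 1) := by
      rw [smul_sub, smul_smul]; abel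
    have hcomm : Commute ((t * μ : ℂ) • (1 : Matrix m m ℂ)) ((t : ℂ) • (B - μ • 1)) :=
      (Commute.one_left _).smul_left _
    have hscalar : exp ((t * μ : ℂ) • (1 : Matrix m m ℂ)) = Complex.exp (t * μ) • 1 := by
      simp only [← Algebra.algebraMap_eq_smul_one, Complex.exp_eq_exp_ℂ]
      open scoped Norms.Operator in exact (algebraMap_exp_comm _).symm
    have hnil : ((t : ℂ) • (B - μ • 1)) ^ N *ᵥ u = 0 := by
      rw [smul_pow, smul_mulVec, hu, smul_zero]
    rw [hsplit, exp_add_of_commute _ _ hcomm, hscalar, smul_one_mul, smul_mulVec,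
      exp_mulVec_eq_sum_of_pow_mulVec_eq_zero _ hnil, smul_sum]
    refine sum_congr rfl fun k _ => ?_
    simp only [smul_pow, smul_mulVec, smul_smul]
    ring_nf
  simp_rw [hexp]
  simpa using tendsto_finsetSum (range N) fun k _ =>
    (Complex.tendsto_exp_mul_mul_pow_atTop_nhds_zero hμ k).smul_const
      (((k ! : ℂ)⁻¹ • (B - μ • 1) ^ k) *ᵥ u)

theorem mem_spectrum_of_pow_sub_mulVec_eq_zero {K : Type*} [Field K] (B : Matrix m m K) {μ : K}
    {u : m → K} {k : ℕ} (hu : (B - μ • 1) ^ k *ᵥ u = 0) (hu0 : u ≠ 0) : μ ∈ spectrum K B := by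
  rw [spectrum.mem_iff, Algebra.algebraMap_eq_smul_one, ← neg_sub]
  intro hunit
  refine hu0 (mulVec_injective_iff_isUnit.mpr ((IsUnit.neg_iff _ |>.mp hunit).pow k) ?_)
  rw [hu, mulVec_zero]

theorem tendsto_exp_smul_mulVec_atTop_nhds_zero (B : Matrix m m ℂ)
    (hB : ∀ μ ∈ spectrum ℂ B, μ.re < 0) (v : m → ℂ) :
    Tendsto (fun t : ℝ => exp ((t : ℂ) • B) *ᵥ v) atTop (𝓝 0) := by
  have hv : v ∈ ⨆ μ, Module.End.maxGenEigenspace (toLinAlgEquiv' B) μ := by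
    rw [Module.End.iSup_maxGenEigenspace_eq_top]; trivial
  refine Submodule.iSup_induction _ (motive := fun v =>
    Tendsto (fun t : ℝ => exp ((t : ℂ) • B) *ᵥ v) atTop (𝓝 0)) hv (fun μ u hu => ?_) (by simp)
    fun x y hx hy => ?_
  · obtain ⟨k, hk⟩ := (Module.End.mem_maxGenEigenspace _ _ _).mp hu
    replace hk : (B - μ • 1) ^ k *ᵥ u = 0 := by
      rwa [← map_one (toLinAlgEquiv' (R := ℂ) (n := m)), ← map_smul, ← map_sub, ← map_pow] at hk
    rcases eq_or_ne u 0 with rfl | hu0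
    · simp
    exact tendsto_exp_smul_mulVec_of_pow_sub_mulVec_eq_zero B
      (hB μ (mem_spectrum_of_pow_sub_mulVec_eq_zero B hk hu0)) hk
  · simpa [mulVec_add] using hx.add hy

theorem tendsto_exp_smul_atTop_nhds_zero (B : Matrix m m ℂ)
    (hB : ∀ μ ∈ spectrum ℂ B, μ.re < 0) :
    Tendsto (fun t : ℝ => exp ((t : ℂ) • B)) atTop (𝓝 0) := by
  refine tendsto_pi_nhds.mpr fun i => tendsto_pi_nhds.mpr fun j => ?_
  simpa [mulVec_single_one] using
    tendsto_pi_nhds.mp (tendsto_exp_smul_mulVec_atTop_nhds_zero B hB (Pi.single j 1)) i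

theorem exp_map_algebraMap (A : Matrix m m ℝ) :
    (exp A).map (algebraMap ℝ ℂ) = exp (A.map (algebraMap ℝ ℂ)) := by
  open scoped Norms.Operator in
  exact map_exp (algebraMap ℝ ℂ).mapMatrix (continuous_id.matrix_map (continuous_algebraMap ℝ ℂ)) A

theorem tendsto_exp_smul_atTop_nhds_zero_of_map_algebraMap (A : Matrix m m ℝ)
    (hA : ∀ μ ∈ spectrum ℂ (A.map (algebraMap ℝ ℂ)), μ.re < 0) :
    Tendsto (fun t : ℝ => exp (t • A)) atTop (𝓝 0) := by
  have hre : Continuous fun M : Matrix m m ℂ => M.map Complex.re :=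
    continuous_id.matrix_map Complex.continuous_re
  convert (hre.tendsto 0).comp (tendsto_exp_smul_atTop_nhds_zero _ hA) using 1
  · ext t : 1
    have hsmul : (t : ℂ) • A.map (algebraMap ℝ ℂ) = (t • A).map (algebraMap ℝ ℂ) := by
      ext; simp
    rw [Function.comp_apply, hsmul, ← exp_map_algebraMap]
    ext; simp
  · simp

noncomputable def lyapunovFlow (A D : Matrix m m ℝ) (t : ℝ) : Matrix m m ℝ :=
  exp (t • A) * D * (exp (t • A))ᵀ

@[simp]
theorem lyapunovFlow_zero (A D : Matrix m m ℝ) : lyapunovFlow A D 0 = D := by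
  simp [lyapunovFlow]

theorem tendsto_lyapunovFlow_atTop {A : Matrix m m ℝ}
    (hA : Tendsto (fun t : ℝ => exp (t • A)) atTop (𝓝 0)) (D : Matrix m m ℝ) :
    Tendsto (lyapunovFlow A D) atTop (𝓝 0) := by
  unfold lyapunovFlow
  simpa using (hA.mul_const D).mul ((continuous_id.matrix_transpose.tendsto 0).comp hA)

theorem PosSemidef.lyapunovFlow {C : Matrix m m ℝ} (hC : C.PosSemidef) (A : Matrix m m ℝ)
    (t : ℝ) : (lyapunovFlow A C t).PosSemidef := by
  simpa [Matrix.lyapunovFlow, conjTranspose_eq_transpose_of_trivial] using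
    hC.mul_mul_conjTranspose_same (exp (t • A))

theorem hasDerivAt_dotProduct_lyapunovFlow_mulVec (A D : Matrix m m ℝ) (x : m → ℝ) (t : ℝ) :
    HasDerivAt (fun s => x ⬝ᵥ lyapunovFlow A D s *ᵥ x)
      (x ⬝ᵥ lyapunovFlow A (A * D + D * Aᵀ) t *ᵥ x) t := by
  open scoped Norms.Operator in
  have hflow : HasDerivAt (lyapunovFlow A D) (lyapunovFlow A (A * D + D * Aᵀ) t) t := by
    have hflow_eq (X : Matrix m m ℝ) :
        lyapunovFlow A X = fun s => exp (s • A) * X * exp (s • Aᵀ) := by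
      ext s : 1
      rw [lyapunovFlow, ← exp_transpose, transpose_smul]
    rw [hflow_eq, hflow_eq]
    refine (((hasDerivAt_exp_smul_const A t).mul_const D).mul
      (hasDerivAt_exp_smul_const' Aᵀ t)).congr_deriv ?_
    noncomm_ring
  let q := LinearMap.toContinuousLinearMap
    ((dotProductBilin ℝ ℝ x).comp ((mulVecBilin ℝ ℝ : Matrix m m ℝ →ₗ[ℝ] _).flip x))
  exact q.hasFDerivAt.comp_hasDerivAt t hflow

theorem antitone_dotProduct_lyapunovFlow_mulVec {A D : Matrix m m ℝ}
    (h : (-(A * D + D * Aᵀ)).PosSemidef) (x : m → ℝ) :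
    Antitone fun t => x ⬝ᵥ lyapunovFlow A D t *ᵥ x := by
  have hderiv := hasDerivAt_dotProduct_lyapunovFlow_mulVec A D x
  refine antitone_of_deriv_nonpos (fun t => (hderiv t).differentiableAt) fun t => ?_
  have hnonneg := (h.lyapunovFlow A t).dotProduct_mulVec_nonneg x
  simp only [lyapunovFlow, Matrix.mul_neg, Matrix.neg_mul, neg_mulVec, dotProduct_neg,
    star_trivial] at hnonneg
  rw [(hderiv t).deriv, lyapunovFlow]
  linarith

theorem posSemidef_of_neg_lyapunov_posSemidef {A D : Matrix m m ℝ}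
    (hA : Tendsto (fun t : ℝ => exp (t • A)) atTop (𝓝 0)) (hD : D.IsSymm)
    (h : (-(A * D + D * Aᵀ)).PosSemidef) : D.PosSemidef := by
  refine posSemidef_iff_dotProduct_mulVec.mpr ⟨isHermitian_iff_isSymm.mpr hD, fun x => ?_⟩
  have hquad : Continuous fun M : Matrix m m ℝ => x ⬝ᵥ M *ᵥ x :=
    continuous_const.dotProduct (continuous_id.matrix_mulVec continuous_const)
  have hlim := (hquad.tendsto 0).comp (tendsto_lyapunovFlow_atTop hA D)
  simpa using (antitone_dotProduct_lyapunovFlow_mulVec h x).le_of_tendsto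
    (by simpa [Function.comp_def] using hlim) 0

end Matrix

theorem lyapunov_comparison_general {n : ℕ} (A Q P P₀ : Matrix (Fin n) (Fin n) ℝ)
    (hA : ∀ μ ∈ spectrum ℂ (A.map (algebraMap ℝ ℂ)), μ.re < 0)
    (hP : P.IsSymm) (hP₀ : P₀.IsSymm)
    (hineq : (-(A * P + P * Aᵀ + Q)).PosSemidef)
    (heq : A * P₀ + P₀ * Aᵀ + Q = 0) : (P - P₀).PosSemidef := by
  have hdiff : A * (P - P₀) + (P - P₀) * Aᵀ = A * P + P * Aᵀ + Q := by
    rw [← sub_zero (A * P + P * Aᵀ + Q), ← heq]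
    noncomm_ring
  refine posSemidef_of_neg_lyapunov_posSemidef
    (tendsto_exp_smul_atTop_nhds_zero_of_map_algebraMap A hA) (hP.sub hP₀) ?_
  rwa [hdiff]

/-- Comparison principle for the Lyapunov inequality: if `A` is Hurwitz, `Q` is symmetric,
`P` satisfies `A P + P Aᵀ + Q ⪯ 0` and `P₀` satisfies `A P₀ + P₀ Aᵀ + Q = 0`,
then `P − P₀` is positive semidefinite. -/
theorem lyapunov_comparison {n : ℕ} (A Q P P₀ : Matrix (Fin n) (Fin n) ℝ)
    (hA : ∀ μ ∈ spectrum ℂ (A.map (algebraMap ℝ ℂ)), μ.re < 0)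
    (hQ : Q.IsSymm) (hP : P.IsSymm) (hP₀ : P₀.IsSymm)
    (hineq : (-(A * P + P * Aᵀ + Q)).PosSemidef)
    (heq : A * P₀ + P₀ * Aᵀ + Q = 0) : (P - P₀).PosSemidef :=
  lyapunov_comparison_general A Q P P₀ hA hP hP₀ hineq heq
end
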